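/- arXiv:1903.00229 — 2 statements merged into one kernel-verified Lean document; each statement's English description precedes it below -/
import Mathlib

section
/- Suppose in addition that there exist constants A > 0 and τ > 0 such that for every f ∈ X, every n ∈ ℕ, and every g ∈ G_n, ‖f − P_n(f)‖_X^τ ≤ ‖f − g‖_X^τ − A‖g − P_n(f)‖_X^τ. Then for every f ∈ X and n ∈ ℕ, (Σ_{k=n+1}^∞ 2^{-kατ}‖P_{2^k}(f)‖_Y^τ)^{1/τ} ≤ C·K(f, 2^{-nα}; X, Y), with C independent of f and n. -/
open scoped ENNReal

/-- The Peetre K-functional `K(f,t;X,Y) = inf{‖f−g‖_X + t‖g‖_Y : g ∈ Y}`. -/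
noncomputable def KFunctional {X : Type*} [SeminormedAddCommGroup X]
    (Y : Set X) (NY : X → ℝ) (f : X) (t : ℝ) : ℝ :=
  sInf {r : ℝ | ∃ g ∈ Y, r = ‖f - g‖ + t * NY g}

/-- The error of best approximation `E_n(f)_X = inf{‖f−g‖_X : g ∈ G_n}`. -/
noncomputable def bestApproxError {X : Type*} [SeminormedAddCommGroup X]
    (G : ℕ → Set X) (n : ℕ) (f : X) : ℝ :=
  sInf {r : ℝ | ∃ g ∈ G n, r = ‖f - g‖}

/-- The realization functional `R(f,n^{-α};X,G_n) = inf{‖f−g‖_X + n^{-α}‖g‖_Y : g ∈ G_n}`. -/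
noncomputable def realization {X : Type*} [SeminormedAddCommGroup X]
    (G : ℕ → Set X) (NY : X → ℝ) (α : ℝ) (n : ℕ) (f : X) : ℝ :=
  sInf {r : ℝ | ∃ g ∈ G n, r = ‖f - g‖ + (n : ℝ) ^ (-α) * NY g}

/-!
Pick `g ∈ G_{2^n}` nearly minimising the realization functional, so that
`‖f - g‖ + 2^{-nα} ‖g‖_Y ≤ C₀ K(f, 2^{-nα}) + ε`, and follow the chain `Q₀ = g`,
`Q_{m+1} = P_{2^{n+m+1}} f`. The hypothesis on best approximants telescopes to
`A ∑ ‖Q_{m+1} - Q_m‖^τ ≤ ‖f - g‖^τ`, while the triangle and Bernstein inequalities give, for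
`x_m = 2^{-(n+m)α} ‖Q_m‖_Y`, the recursion `x_{m+1} ≤ 2^{-α} x_m + c₂ ‖Q_{m+1} - Q_m‖`.
Since `(γ x + e)^τ ≤ β^τ x^τ + (β / (β - γ))^τ e^τ` for `γ < β < 1`, a contraction of ratio
`γ = 2^{-α}` perturbed by `e_m` in this way has `∑ x_m^τ` bounded by a multiple of
`x₀^τ + ∑ e_m^τ`, for every `τ > 0`.
-/

open Finset

theorem rpow_mul_add_le {γ β τ x e : ℝ} (hγ : 0 ≤ γ) (hγβ : γ < β) (hτ : 0 ≤ τ)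
    (hx : 0 ≤ x) (he : 0 ≤ e) :
    (γ * x + e) ^ τ ≤ β ^ τ * x ^ τ + (β / (β - γ)) ^ τ * e ^ τ := by
  have hβγ : 0 < β - γ := sub_pos.2 hγβ
  have hβ : 0 ≤ β := hγ.trans hγβ.le
  rcases le_or_gt e ((β - γ) * x) with hsmall | hlarge
  · have hle : γ * x + e ≤ β * x := by linarith
    calc (γ * x + e) ^ τ ≤ (β * x) ^ τ := by gcongr
      _ = β ^ τ * x ^ τ := Real.mul_rpow hβ hx
      _ ≤ β ^ τ * x ^ τ + (β / (β - γ)) ^ τ * e ^ τ := le_add_of_nonneg_right (by positivity)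
  · have hle : γ * x + e ≤ β / (β - γ) * e := by
      rw [div_mul_eq_mul_div, le_div_iff₀ hβγ]
      nlinarith
    calc (γ * x + e) ^ τ ≤ (β / (β - γ) * e) ^ τ := by gcongr
      _ = (β / (β - γ)) ^ τ * e ^ τ := Real.mul_rpow (by positivity) he
      _ ≤ β ^ τ * x ^ τ + (β / (β - γ)) ^ τ * e ^ τ := le_add_of_nonneg_left (by positivity)

theorem sum_range_succ_le_of_le_mul_add {q : ℝ} (hq0 : 0 ≤ q) (hq1 : q < 1) {X E : ℕ → ℝ}
    (hX : ∀ m, 0 ≤ X m) (hrec : ∀ m, X (m + 1) ≤ q * X m + E m) (N : ℕ) :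
    ∑ m ∈ range N, X (m + 1) ≤ (1 - q)⁻¹ * (X 0 + ∑ m ∈ range N, E m) := by
  have hshift : ∑ m ∈ range N, X m ≤ X 0 + ∑ m ∈ range N, X (m + 1) := by
    have := sum_range_succ' X N
    rw [sum_range_succ] at this
    linarith [hX N]
  have hsum : ∑ m ∈ range N, X (m + 1) ≤ q * ∑ m ∈ range N, X m + ∑ m ∈ range N, E m := by
    rw [mul_sum, ← sum_add_distrib]
    exact sum_le_sum fun m _ => hrec m
  rw [← div_eq_inv_mul, le_div_iff₀ (sub_pos.2 hq1)]
  nlinarith [hX 0]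

theorem sum_range_rpow_succ_le {γ τ : ℝ} (hγ0 : 0 ≤ γ) (hγ1 : γ < 1) (hτ : 0 < τ)
    {x e : ℕ → ℝ} (hx : ∀ m, 0 ≤ x m) (he : ∀ m, 0 ≤ e m)
    (hrec : ∀ m, x (m + 1) ≤ γ * x m + e m) (N : ℕ) :
    ∑ m ∈ range N, x (m + 1) ^ τ ≤ (1 - ((1 + γ) / 2) ^ τ)⁻¹ *
      (x 0 ^ τ + ((1 + γ) / (1 - γ)) ^ τ * ∑ m ∈ range N, e m ^ τ) := by
  have hβ : ((1 + γ) / 2) / ((1 + γ) / 2 - γ) = (1 + γ) / (1 - γ) := by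
    field_simp
    ring
  have hstep : ∀ m, x (m + 1) ^ τ ≤
      ((1 + γ) / 2) ^ τ * x m ^ τ + ((1 + γ) / (1 - γ)) ^ τ * e m ^ τ := fun m => by
    rw [← hβ]
    exact (Real.rpow_le_rpow (hx _) (hrec m) hτ.le).trans
      (rpow_mul_add_le hγ0 (by linarith) hτ.le (hx m) (he m))
  rw [mul_sum]
  exact sum_range_succ_le_of_le_mul_add (X := fun m => x m ^ τ) (by positivity)
    (Real.rpow_lt_one (by positivity) (by linarith) hτ) (fun m => by have := hx m; positivity)
    hstep N

theorem sum_range_le_of_le_sub {a b : ℕ → ℝ} (ha : ∀ m, 0 ≤ a m)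
    (h : ∀ m, a (m + 1) ≤ a m - b m) (N : ℕ) : ∑ m ∈ range N, b m ≤ a 0 := by
  have htel := sum_range_sub a N
  have : ∑ m ∈ range N, b m ≤ ∑ m ∈ range N, -(a (m + 1) - a m) :=
    sum_le_sum fun m _ => by linarith [h m]
  rw [sum_neg_distrib, htel] at this
  linarith [ha N]

noncomputable def chainConst (γ τ c A : ℝ) : ℝ :=
  (1 - ((1 + γ) / 2) ^ τ)⁻¹ * (1 + ((1 + γ) / (1 - γ)) ^ τ * c ^ τ / A)

theorem chainConst_pos {γ τ c A : ℝ} (hγ0 : 0 ≤ γ) (hγ1 : γ < 1) (hc : 0 ≤ c) (hA : 0 < A)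
    (hτ : 0 < τ) : 0 < chainConst γ τ c A := by
  have hq : 0 < 1 - ((1 + γ) / 2) ^ τ :=
    sub_pos.2 (Real.rpow_lt_one (by positivity) (by linarith) hτ)
  have hK : 0 ≤ ((1 + γ) / (1 - γ)) ^ τ :=
    Real.rpow_nonneg (div_nonneg (by linarith) (by linarith)) τ
  unfold chainConst
  positivity

theorem sum_rpow_chain_le {X : Type*} [SeminormedAddCommGroup X] {NY : X → ℝ} {f : X}
    {Q : ℕ → X} {w : ℕ → ℝ} {γ c A τ : ℝ} (hγ0 : 0 ≤ γ) (hγ1 : γ < 1) (hc : 0 ≤ c)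
    (hA : 0 < A) (hτ : 0 < τ) (hNY : ∀ g, 0 ≤ NY g) (hw : ∀ m, 0 ≤ w m)
    (hwγ : ∀ m, w (m + 1) = γ * w m)
    (htri : ∀ m, NY (Q (m + 1)) ≤ NY (Q m) + NY (Q (m + 1) - Q m))
    (hbern : ∀ m, w (m + 1) * NY (Q (m + 1) - Q m) ≤ c * ‖Q (m + 1) - Q m‖)
    (hdesc : ∀ m, ‖f - Q (m + 1)‖ ^ τ ≤ ‖f - Q m‖ ^ τ - A * ‖Q (m + 1) - Q m‖ ^ τ) (N : ℕ) :
    ∑ m ∈ range N, (w (m + 1) * NY (Q (m + 1))) ^ τ ≤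
      chainConst γ τ c A * (‖f - Q 0‖ + w 0 * NY (Q 0)) ^ τ := by
  set r := ‖f - Q 0‖ + w 0 * NY (Q 0)
  have hrec : ∀ m, w (m + 1) * NY (Q (m + 1)) ≤ γ * (w m * NY (Q m)) + c * ‖Q (m + 1) - Q m‖ :=
    fun m => calc
      w (m + 1) * NY (Q (m + 1)) ≤ w (m + 1) * (NY (Q m) + NY (Q (m + 1) - Q m)) :=
        mul_le_mul_of_nonneg_left (htri m) (hw _)
      _ ≤ γ * (w m * NY (Q m)) + c * ‖Q (m + 1) - Q m‖ := by
        rw [mul_add, ← mul_assoc, ← hwγ]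
        linarith [hbern m]
  have hgeom := sum_range_rpow_succ_le hγ0 hγ1 hτ (fun m => mul_nonneg (hw m) (hNY _))
    (fun m => mul_nonneg hc (norm_nonneg _)) hrec N
  have hdist : A * ∑ m ∈ range N, ‖Q (m + 1) - Q m‖ ^ τ ≤ r ^ τ := by
    rw [mul_sum]
    refine (sum_range_le_of_le_sub (a := fun m => ‖f - Q m‖ ^ τ) (fun m => by positivity)
      hdesc N).trans ?_
    exact Real.rpow_le_rpow (norm_nonneg _)
      (le_add_of_nonneg_right (mul_nonneg (hw 0) (hNY _))) hτ.le
  have hx0 : (w 0 * NY (Q 0)) ^ τ ≤ r ^ τ :=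
    Real.rpow_le_rpow (mul_nonneg (hw 0) (hNY _)) (le_add_of_nonneg_left (norm_nonneg _)) hτ.le
  have he : ∑ m ∈ range N, (c * ‖Q (m + 1) - Q m‖) ^ τ ≤ c ^ τ * r ^ τ / A := by
    simp_rw [Real.mul_rpow hc (norm_nonneg _), ← mul_sum]
    rw [le_div_iff₀ hA, mul_assoc, mul_comm _ A]
    exact mul_le_mul_of_nonneg_left hdist (by positivity)
  have hq : 0 < 1 - ((1 + γ) / 2) ^ τ :=
    sub_pos.2 (Real.rpow_lt_one (by positivity) (by linarith) hτ)
  have hK : 0 ≤ ((1 + γ) / (1 - γ)) ^ τ :=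
    Real.rpow_nonneg (div_nonneg (by linarith) (by linarith)) τ
  refine hgeom.trans ?_
  rw [chainConst, mul_assoc]
  gcongr
  calc _ ≤ r ^ τ + ((1 + γ) / (1 - γ)) ^ τ * (c ^ τ * r ^ τ / A) := by gcongr
    _ = _ := by ring

theorem natCast_two_pow_rpow (k : ℕ) (s : ℝ) : ((2 ^ k : ℕ) : ℝ) ^ s = 2 ^ ((k : ℝ) * s) := by
  rw [Nat.cast_pow, Nat.cast_ofNat, ← Real.rpow_natCast, ← Real.rpow_mul zero_le_two]

theorem le_mul_rpow_of_forall_pos_le {a B c τ : ℝ} (hτ : 0 < τ)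
    (h : ∀ ε > 0, a ≤ B * (c + ε) ^ τ) : a ≤ B * c ^ τ := by
  have hcont : ContinuousAt (fun ε : ℝ => B * (c + ε) ^ τ) 0 :=
    continuousAt_const.mul ((continuousAt_const.add continuousAt_id).rpow_const (Or.inr hτ.le))
  have hlim : Filter.Tendsto (fun ε : ℝ => B * (c + ε) ^ τ) (nhdsWithin 0 (Set.Ioi 0))
      (nhds (B * c ^ τ)) := by
    simpa using hcont.tendsto.mono_left nhdsWithin_le_nhds
  exact ge_of_tendsto hlim (eventually_nhdsWithin_of_forall h)

theorem tsum_ofReal_rpow_le {a : ℕ → ℝ} {τ S : ℝ} (hτ : 0 < τ) (ha : ∀ k, 0 ≤ a k)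
    (hS : 0 ≤ S) (h : ∀ N, ∑ k ∈ range N, a k ^ τ ≤ S ^ τ) :
    (∑' k, ENNReal.ofReal (a k ^ τ)) ^ (1 / τ) ≤ ENNReal.ofReal S := by
  have hsum : ∑' k, ENNReal.ofReal (a k ^ τ) ≤ ENNReal.ofReal (S ^ τ) :=
    ENNReal.tsum_le_of_sum_range_le fun N => by
      rw [← ENNReal.ofReal_sum_of_nonneg fun k _ => Real.rpow_nonneg (ha k) τ]
      exact ENNReal.ofReal_le_ofReal (h N)
  calc (∑' k, ENNReal.ofReal (a k ^ τ)) ^ (1 / τ) ≤ ENNReal.ofReal (S ^ τ) ^ (1 / τ) :=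
        ENNReal.rpow_le_rpow hsum (by positivity)
    _ = ENNReal.ofReal S := by
        rw [ENNReal.ofReal_rpow_of_nonneg (by positivity) (by positivity), ← Real.rpow_mul hS,
          mul_one_div_cancel hτ.ne', Real.rpow_one]

theorem KFunctional_nonneg {X : Type*} [SeminormedAddCommGroup X] {Y : Set X} {NY : X → ℝ}
    (hNY : ∀ g, 0 ≤ NY g) (f : X) {t : ℝ} (ht : 0 ≤ t) : 0 ≤ KFunctional Y NY f t :=
  Real.sInf_nonneg fun _ ⟨g, _, hr⟩ => hr ▸ add_nonneg (norm_nonneg _) (mul_nonneg ht (hNY g))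

theorem exists_lt_of_realization_lt {X : Type*} [SeminormedAddCommGroup X] {G : ℕ → Set X}
    {NY : X → ℝ} {α r : ℝ} {n : ℕ} {f : X} (hG : (G n).Nonempty)
    (h : realization G NY α n f < r) : ∃ g ∈ G n, ‖f - g‖ + (n : ℝ) ^ (-α) * NY g < r := by
  obtain ⟨g₀, hg₀⟩ := hG
  unfold realization at h
  obtain ⟨_, ⟨g, hg, rfl⟩, hlt⟩ := exists_lt_of_csInf_lt (by exact ⟨_, g₀, hg₀, rfl⟩) h
  exact ⟨g, hg, hlt⟩

def dyadicChain {X : Type*} (P : ℕ → X → X) (f g : X) (n : ℕ) : ℕ → X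
  | 0 => g
  | m + 1 => P (2 ^ (n + (m + 1))) f

theorem dyadicChain_mem {X : Type*} {G : ℕ → Set X} {P : ℕ → X → X}
    (hP : ∀ (f : X) (n : ℕ), 1 ≤ n → P n f ∈ G n) {f g : X} {n : ℕ} (hg : g ∈ G (2 ^ n)) :
    ∀ m, dyadicChain P f g n m ∈ G (2 ^ (n + m))
  | 0 => hg
  | _ + 1 => hP f _ Nat.one_le_two_pow

theorem two_rpow_neg_lt_one {α : ℝ} (hα : 0 < α) : (2 : ℝ) ^ (-α) < 1 :=
  Real.rpow_lt_one_of_one_lt_of_neg one_lt_two (neg_lt_zero.2 hα)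

theorem two_rpow_neg_mul_mul_natCast_two_pow_rpow (k : ℕ) (α : ℝ) :
    (2 : ℝ) ^ (-(k : ℝ) * α) * ((2 ^ k : ℕ) : ℝ) ^ α = 1 := by
  rw [natCast_two_pow_rpow, ← Real.rpow_add two_pos, neg_mul, neg_add_cancel, Real.rpow_zero]

theorem sum_rpow_dyadicChain_le {X : Type*} [SeminormedAddCommGroup X] [Module ℝ X]
    {Y : Submodule ℝ X} {NY : X → ℝ} {G : ℕ → Set X} {P : ℕ → X → X} {α c₂ A τ : ℝ}
    (hNY_nonneg : ∀ g : X, 0 ≤ NY g)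
    (hNY_add : ∀ g h : X, g ∈ Y → h ∈ Y → NY (g + h) ≤ NY g + NY h)
    (hG_mono : Monotone G) (hG_sub : ∀ n : ℕ, G n ⊆ (Y : Set X))
    (hα : 0 < α) (hc₂ : 0 ≤ c₂) (hA : 0 < A) (hτ : 0 < τ)
    (bernstein : ∀ n : ℕ, 1 ≤ n → ∀ g₁ ∈ G n, ∀ g₂ ∈ G n,
      NY (g₁ - g₂) ≤ c₂ * (n : ℝ) ^ α * ‖g₁ - g₂‖)
    (hP : ∀ (f : X) (n : ℕ), 1 ≤ n → P n f ∈ G n)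
    (hAineq : ∀ (f : X) (n : ℕ), 1 ≤ n → ∀ g ∈ G n,
      ‖f - P n f‖ ^ τ ≤ ‖f - g‖ ^ τ - A * ‖g - P n f‖ ^ τ)
    {f g : X} {n : ℕ} (hg : g ∈ G (2 ^ n)) (N : ℕ) :
    ∑ k ∈ range N, ((2 : ℝ) ^ (-((n + 1 + k : ℕ) : ℝ) * α) * NY (P (2 ^ (n + 1 + k)) f)) ^ τ ≤
      chainConst (2 ^ (-α)) τ c₂ A * (‖f - g‖ + (2 : ℝ) ^ (-(n : ℝ) * α) * NY g) ^ τ := by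
  set Q := dyadicChain P f g n
  set w : ℕ → ℝ := fun m => (2 : ℝ) ^ (-((n + m : ℕ) : ℝ) * α)
  have hmem : ∀ m, Q m ∈ G (2 ^ (n + m)) := dyadicChain_mem hP hg
  have hmem_succ : ∀ m, Q m ∈ G (2 ^ (n + (m + 1))) := fun m =>
    hG_mono (Nat.pow_le_pow_right two_pos (by omega)) (hmem m)
  have hw : ∀ m, w (m + 1) = 2 ^ (-α) * w m := fun m => by
    simp only [w, ← Real.rpow_add two_pos]
    congr 1
    push_cast
    ring
  have htri : ∀ m, NY (Q (m + 1)) ≤ NY (Q m) + NY (Q (m + 1) - Q m) := fun m => by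
    have h := hNY_add _ _ (Y.sub_mem (hG_sub _ (hmem (m + 1))) (hG_sub _ (hmem m)))
      (hG_sub _ (hmem m))
    rw [sub_add_cancel] at h
    exact h.trans_eq (add_comm _ _)
  have hbern : ∀ m, w (m + 1) * NY (Q (m + 1) - Q m) ≤ c₂ * ‖Q (m + 1) - Q m‖ := fun m => calc
    w (m + 1) * NY (Q (m + 1) - Q m)
        ≤ w (m + 1) * (c₂ * ((2 ^ (n + (m + 1)) : ℕ) : ℝ) ^ α * ‖Q (m + 1) - Q m‖) :=
      mul_le_mul_of_nonneg_left (bernstein _ Nat.one_le_two_pow _ (hmem (m + 1)) _ (hmem_succ m))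
        (Real.rpow_nonneg zero_le_two _)
    _ = c₂ * ‖Q (m + 1) - Q m‖ * (w (m + 1) * ((2 ^ (n + (m + 1)) : ℕ) : ℝ) ^ α) := by ring
    _ = c₂ * ‖Q (m + 1) - Q m‖ := by
      rw [two_rpow_neg_mul_mul_natCast_two_pow_rpow, mul_one]
  have hdesc : ∀ m, ‖f - Q (m + 1)‖ ^ τ ≤ ‖f - Q m‖ ^ τ - A * ‖Q (m + 1) - Q m‖ ^ τ := fun m => by
    have h := hAineq f _ Nat.one_le_two_pow (Q m) (hmem_succ m)
    rwa [norm_sub_rev (Q m)] at h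
  calc _ = ∑ k ∈ range N, (w (k + 1) * NY (Q (k + 1))) ^ τ :=
        sum_congr rfl fun k _ => by rw [show n + 1 + k = n + (k + 1) by omega]; rfl
    _ ≤ chainConst (2 ^ (-α)) τ c₂ A * (‖f - Q 0‖ + w 0 * NY (Q 0)) ^ τ :=
        sum_rpow_chain_le (Q := Q) (w := w) (Real.rpow_nonneg zero_le_two _)
          (two_rpow_neg_lt_one hα) hc₂ hA hτ hNY_nonneg (fun m => Real.rpow_nonneg zero_le_two _)
          hw htri hbern hdesc N

theorem stmt4_general {X : Type*} [NormedAddCommGroup X] [NormedSpace ℝ X]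
    (Y : Submodule ℝ X) (NY : X → ℝ)
    (hNY_nonneg : ∀ g : X, 0 ≤ NY g)
    (hNY_add : ∀ g h : X, g ∈ Y → h ∈ Y → NY (g + h) ≤ NY g + NY h)
    (G : ℕ → Set X)
    (hG_zero : (0 : X) ∈ G 1)
    (hG_mono : ∀ n : ℕ, G n ⊆ G (n + 1))
    (hG_sub : ∀ n : ℕ, G n ⊆ (Y : Set X))
    (α : ℝ) (hα : 0 < α)
    (c₂ : ℝ) (hc₂ : 0 < c₂)
    (bernstein : ∀ n : ℕ, 1 ≤ n → ∀ g₁ ∈ G n, ∀ g₂ ∈ G n,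
      NY (g₁ - g₂) ≤ c₂ * (n : ℝ) ^ α * ‖g₁ - g₂‖)
    (C₀ : ℝ) (hC₀ : 0 < C₀)
    (hreal : ∀ (f : X) (n : ℕ), 1 ≤ n →
      realization G NY α n f ≤ C₀ * KFunctional (Y : Set X) NY f ((n : ℝ) ^ (-α)))
    (P : ℕ → X → X)
    (hP : ∀ (f : X) (n : ℕ), 1 ≤ n → P n f ∈ G n ∧ ‖f - P n f‖ = bestApproxError G n f)
    (A τ : ℝ) (hA : 0 < A) (hτ : 0 < τ)
    (hAineq : ∀ (f : X) (n : ℕ), 1 ≤ n → ∀ g ∈ G n,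
      ‖f - P n f‖ ^ τ ≤ ‖f - g‖ ^ τ - A * ‖g - P n f‖ ^ τ) :
    ∃ C : ℝ, 0 < C ∧ ∀ (f : X) (n : ℕ), 1 ≤ n →
      (∑' k : ℕ,
          ENNReal.ofReal
            (((2 : ℝ) ^ (-((n + 1 + k : ℕ) : ℝ) * α) * NY (P (2 ^ (n + 1 + k)) f)) ^ τ)) ^
          (1 / τ)
        ≤ ENNReal.ofReal
            (C * KFunctional (Y : Set X) NY f ((2 : ℝ) ^ (-(n : ℝ) * α))) := by
  have hG : Monotone G := monotone_nat_of_le_succ hG_mono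
  set B := chainConst (2 ^ (-α)) τ c₂ A
  have hB : 0 < B :=
    chainConst_pos (Real.rpow_nonneg zero_le_two _) (two_rpow_neg_lt_one hα) hc₂.le hA hτ
  refine ⟨B ^ (1 / τ) * C₀, by positivity, fun f n _ => ?_⟩
  set K := KFunctional (Y : Set X) NY f ((2 : ℝ) ^ (-(n : ℝ) * α))
  have hK : 0 ≤ K := KFunctional_nonneg hNY_nonneg f (by positivity)
  refine tsum_ofReal_rpow_le hτ (fun k => mul_nonneg (by positivity) (hNY_nonneg _))
    (by positivity) fun N => ?_
  rw [mul_assoc, Real.mul_rpow (by positivity) (by positivity), ← Real.rpow_mul hB.le,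
    one_div_mul_cancel hτ.ne', Real.rpow_one]
  refine le_mul_rpow_of_forall_pos_le hτ fun ε hε => ?_
  have hreal_n := hreal f (2 ^ n) Nat.one_le_two_pow
  rw [natCast_two_pow_rpow, mul_neg, ← neg_mul] at hreal_n
  obtain ⟨g, hg, hgε⟩ := exists_lt_of_realization_lt ⟨0, hG Nat.one_le_two_pow hG_zero⟩
    (hreal_n.trans_lt (lt_add_of_pos_right _ hε))
  rw [natCast_two_pow_rpow, mul_neg, ← neg_mul] at hgε
  calc _ ≤ B * (‖f - g‖ + (2 : ℝ) ^ (-(n : ℝ) * α) * NY g) ^ τ :=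
        sum_rpow_dyadicChain_le hNY_nonneg hNY_add hG hG_sub hα hc₂.le hA hτ bernstein
          (fun f n hn => (hP f n hn).1) hAineq hg N
    _ ≤ B * (C₀ * K + ε) ^ τ := by
        gcongr
        exact add_nonneg (norm_nonneg _) (mul_nonneg (by positivity) (hNY_nonneg _))

/-- Lemma (A). Under Jackson, Bernstein, and the realization
assumption, if the best approximants satisfy
`‖f − P_n(f)‖^τ ≤ ‖f−g‖^τ − A‖g − P_n(f)‖^τ` for all `g ∈ G_n`, then
`(∑_{k=n+1}^∞ 2^{-kατ} ‖P_{2^k}(f)‖_Y^τ)^{1/τ} ≲ K(f, 2^{-nα}; X, Y)`. -/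
theorem stmt4 {X : Type*} [NormedAddCommGroup X] [NormedSpace ℝ X]
    (Y : Submodule ℝ X) (NY : X → ℝ)
    (hNY_nonneg : ∀ g : X, 0 ≤ NY g)
    (hNY_add : ∀ g h : X, g ∈ Y → h ∈ Y → NY (g + h) ≤ NY g + NY h)
    (hNY_smul : ∀ (c : ℝ) (g : X), g ∈ Y → NY (c • g) = |c| * NY g)
    (G : ℕ → Set X)
    (hG_zero : (0 : X) ∈ G 1)
    (hG_mono : ∀ n : ℕ, G n ⊆ G (n + 1))
    (hG_neg : ∀ (n : ℕ) (g : X), g ∈ G n → -g ∈ G n)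
    (hG_sub : ∀ n : ℕ, G n ⊆ (Y : Set X))
    (hG_dense : Dense (⋃ n : ℕ, G (n + 1)))
    (α : ℝ) (hα : 0 < α)
    (c₁ c₂ : ℝ) (hc₁ : 0 < c₁) (hc₂ : 0 < c₂)
    (jackson : ∀ f ∈ Y, ∀ n : ℕ, 1 ≤ n →
      bestApproxError G n f ≤ c₁ * (n : ℝ) ^ (-α) * NY f)
    (bernstein : ∀ n : ℕ, 1 ≤ n → ∀ g₁ ∈ G n, ∀ g₂ ∈ G n,
      NY (g₁ - g₂) ≤ c₂ * (n : ℝ) ^ α * ‖g₁ - g₂‖)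
    (C₀ : ℝ) (hC₀ : 0 < C₀)
    (hreal : ∀ (f : X) (n : ℕ), 1 ≤ n →
      realization G NY α n f ≤ C₀ * KFunctional (Y : Set X) NY f ((n : ℝ) ^ (-α)))
    (P : ℕ → X → X)
    (hP : ∀ (f : X) (n : ℕ), 1 ≤ n → P n f ∈ G n ∧ ‖f - P n f‖ = bestApproxError G n f)
    (A τ : ℝ) (hA : 0 < A) (hτ : 0 < τ)
    (hAineq : ∀ (f : X) (n : ℕ), 1 ≤ n → ∀ g ∈ G n,
      ‖f - P n f‖ ^ τ ≤ ‖f - g‖ ^ τ - A * ‖g - P n f‖ ^ τ) :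
    ∃ C : ℝ, 0 < C ∧ ∀ (f : X) (n : ℕ), 1 ≤ n →
      (∑' k : ℕ,
          ENNReal.ofReal
            (((2 : ℝ) ^ (-((n + 1 + k : ℕ) : ℝ) * α) * NY (P (2 ^ (n + 1 + k)) f)) ^ τ)) ^
          (1 / τ)
        ≤ ENNReal.ofReal
            (C * KFunctional (Y : Set X) NY f ((2 : ℝ) ^ (-(n : ℝ) * α))) :=
  stmt4_general Y NY hNY_nonneg hNY_add G hG_zero hG_mono hG_sub α hα c₂ hc₂ bernstein C₀ hC₀ hreal
    P hP A τ hA hτ hAineq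
end

section
/- Suppose in addition that there exist constants B > 0 and θ > 0 such that for every f ∈ X, every n ∈ ℕ, and every g ∈ G_n, ‖f − g‖_X^θ ≤ ‖f − P_n(f)‖_X^θ + B‖g − P_n(f)‖_X^θ. Then for every f ∈ X and n ∈ ℕ, K(f, 2^{-nα}; X, Y) ≤ C·(Σ_{k=n+1}^∞ 2^{-kαθ}‖P_{2^k}(f)‖_Y^θ)^{1/θ}, with C independent of f and n. -/
open scoped ENNReal

/-!
Write `e m = ‖f - P (2 ^ m) f‖`. Comparing `f` with the best `2 ^ m`-approximation of
`P (2 ^ (m + 1)) f`, which lies in `G (2 ^ (m + 1))`, the hypothesis on best approximants and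
the Jackson inequality for `P (2 ^ (m + 1)) f ∈ Y` give
`e m ^ θ ≤ e (m + 1) ^ θ + B * (c₁ * 2 ^ (-m α) * ‖P (2 ^ (m + 1)) f‖_Y) ^ θ`.
By density `e m → 0`, so telescoping bounds `e (n + 1) ^ θ` by a constant times the tail sum.
Finally `K(f, 2 ^ (-n α)) ≤ e (n + 1) + 2 ^ (-n α) * ‖P (2 ^ (n + 1)) f‖_Y`, and the second term is
`2 ^ α` times the `θ`-th root of the first term of the sum.
-/

open Filter Topology

lemma ENNReal.le_tsum_of_le_add_of_tendsto_zero {u b : ℕ → ℝ≥0∞}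
    (h : ∀ m, u m ≤ u (m + 1) + b m) (hu : Tendsto u atTop (𝓝 0)) : u 0 ≤ ∑' m, b m := by
  have htel : ∀ k, u 0 ≤ u k + ∑ i ∈ Finset.range k, b i := by
    intro k
    induction k with
    | zero => simp
    | succ k ih =>
      calc u 0 ≤ u (k + 1) + b k + ∑ i ∈ Finset.range k, b i := ih.trans (by gcongr; exact h k)
        _ = u (k + 1) + ∑ i ∈ Finset.range (k + 1), b i := by
          rw [Finset.sum_range_succ, add_assoc, add_comm (b k)]
  have hlim : Tendsto (fun k => u k + ∑' m, b m) atTop (𝓝 (∑' m, b m)) := by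
    simpa using hu.add_const (∑' m, b m)
  exact ge_of_tendsto' hlim fun k => (htel k).trans (by gcongr; exact ENNReal.sum_le_tsum _)

lemma ENNReal.ofReal_le_rpow_one_div {x θ : ℝ} {y : ℝ≥0∞} (hx : 0 ≤ x) (hθ : 0 < θ)
    (h : ENNReal.ofReal (x ^ θ) ≤ y) : ENNReal.ofReal x ≤ y ^ (1 / θ) := by
  rwa [one_div, ENNReal.le_rpow_inv_iff hθ, ENNReal.ofReal_rpow_of_nonneg hx hθ.le]

lemma two_rpow_neg_natCast_mul (m : ℕ) (α : ℝ) :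
    (2 : ℝ) ^ (-(m : ℝ) * α) = 2 ^ α * (2 : ℝ) ^ (-((m + 1 : ℕ) : ℝ) * α) := by
  rw [← Real.rpow_add two_pos]
  push_cast
  ring_nf

lemma natCast_two_pow_rpow_neg (m : ℕ) (α : ℝ) :
    ((2 ^ m : ℕ) : ℝ) ^ (-α) = 2 ^ α * (2 : ℝ) ^ (-((m + 1 : ℕ) : ℝ) * α) := by
  rw [← two_rpow_neg_natCast_mul, Nat.cast_pow, Nat.cast_ofNat, ← Real.rpow_natCast,
    ← Real.rpow_mul zero_le_two, neg_mul_comm]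

section BestApproximation

variable {X : Type*} [SeminormedAddCommGroup X]

lemma bestApproxError_le_norm_sub {G : ℕ → Set X} {n : ℕ} (f : X) {g : X} (hg : g ∈ G n) :
    bestApproxError G n f ≤ ‖f - g‖ :=
  csInf_le ⟨0, by rintro r ⟨g, -, rfl⟩; exact norm_nonneg _⟩ ⟨g, hg, rfl⟩

lemma KFunctional_le {Y : Set X} {NY : X → ℝ} (hNY : ∀ g ∈ Y, 0 ≤ NY g) {t : ℝ} (ht : 0 ≤ t)
    (f : X) {g : X} (hg : g ∈ Y) :
    KFunctional Y NY f t ≤ ‖f - g‖ + t * NY g := by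
  refine csInf_le ⟨0, ?_⟩ ⟨g, hg, rfl⟩
  rintro r ⟨g, hg, rfl⟩
  exact add_nonneg (norm_nonneg _) (mul_nonneg ht (hNY g hg))

lemma tendsto_norm_sub_bestApprox {G : ℕ → Set X} (hG : Monotone G)
    (hdense : Dense (⋃ n : ℕ, G (n + 1))) {P : ℕ → X → X}
    (hP : ∀ (f : X) (n : ℕ), 1 ≤ n → ‖f - P n f‖ = bestApproxError G n f) (f : X) :
    Tendsto (fun n => ‖f - P n f‖) atTop (𝓝 0) := by
  refine Metric.tendsto_atTop.2 fun ε hε => ?_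
  obtain ⟨g, hg, hfg⟩ := hdense.exists_dist_lt f hε
  obtain ⟨j, hgj⟩ := Set.mem_iUnion.1 hg
  refine ⟨j + 1, fun n hn => ?_⟩
  rw [Real.dist_0_eq_abs, abs_of_nonneg (norm_nonneg _), hP f n (by omega)]
  exact (bestApproxError_le_norm_sub f (hG hn hgj)).trans_lt (by rwa [← dist_eq_norm])

lemma norm_sub_bestApprox_rpow_le {Y : Set X} {NY : X → ℝ} {G : ℕ → Set X} (hG : Monotone G)
    (hGY : ∀ n, G n ⊆ Y) {α c : ℝ}
    (jackson : ∀ f ∈ Y, ∀ n : ℕ, 1 ≤ n → bestApproxError G n f ≤ c * (n : ℝ) ^ (-α) * NY f)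
    {P : ℕ → X → X}
    (hP : ∀ (f : X) (n : ℕ), 1 ≤ n → P n f ∈ G n ∧ ‖f - P n f‖ = bestApproxError G n f)
    {B θ : ℝ} (hB : 0 ≤ B) (hθ : 0 ≤ θ)
    (hBineq : ∀ (f : X) (n : ℕ), 1 ≤ n → ∀ g ∈ G n,
      ‖f - g‖ ^ θ ≤ ‖f - P n f‖ ^ θ + B * ‖g - P n f‖ ^ θ)
    (f : X) {m k : ℕ} (hm : 1 ≤ m) (hmk : m ≤ k) :
    ‖f - P m f‖ ^ θ ≤ ‖f - P k f‖ ^ θ + B * (c * (m : ℝ) ^ (-α) * NY (P k f)) ^ θ := by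
  set F := P k f
  have hF : F ∈ G k := (hP f k (hm.trans hmk)).1
  have hq : P m F ∈ G m := (hP F m hm).1
  have hfq : ‖f - P m f‖ ≤ ‖f - P m F‖ := by
    rw [(hP f m hm).2]
    exact bestApproxError_le_norm_sub f hq
  have hqF : ‖P m F - F‖ ≤ c * (m : ℝ) ^ (-α) * NY F := by
    rw [norm_sub_rev, (hP F m hm).2]
    exact jackson F (hGY k hF) m hm
  calc ‖f - P m f‖ ^ θ ≤ ‖f - P m F‖ ^ θ := by gcongr
    _ ≤ ‖f - F‖ ^ θ + B * ‖P m F - F‖ ^ θ := hBineq f k (hm.trans hmk) _ (hG hmk hq)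
    _ ≤ ‖f - F‖ ^ θ + B * (c * (m : ℝ) ^ (-α) * NY F) ^ θ := by gcongr

lemma ofReal_norm_sub_bestApprox_rpow_le_tsum {Y : Set X} {NY : X → ℝ}
    (hNY : ∀ g ∈ Y, 0 ≤ NY g) {G : ℕ → Set X} (hG : Monotone G)
    (hGY : ∀ n, G n ⊆ Y) (hdense : Dense (⋃ n : ℕ, G (n + 1))) {α c : ℝ} (hc : 0 ≤ c)
    (jackson : ∀ f ∈ Y, ∀ n : ℕ, 1 ≤ n → bestApproxError G n f ≤ c * (n : ℝ) ^ (-α) * NY f)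
    {P : ℕ → X → X}
    (hP : ∀ (f : X) (n : ℕ), 1 ≤ n → P n f ∈ G n ∧ ‖f - P n f‖ = bestApproxError G n f)
    {B θ : ℝ} (hB : 0 ≤ B) (hθ : 0 < θ)
    (hBineq : ∀ (f : X) (n : ℕ), 1 ≤ n → ∀ g ∈ G n,
      ‖f - g‖ ^ θ ≤ ‖f - P n f‖ ^ θ + B * ‖g - P n f‖ ^ θ)
    (f : X) (N : ℕ) :
    ENNReal.ofReal (‖f - P (2 ^ N) f‖ ^ θ) ≤ ENNReal.ofReal (B * (c * 2 ^ α) ^ θ) *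
      ∑' k, ENNReal.ofReal
        (((2 : ℝ) ^ (-((N + k + 1 : ℕ) : ℝ) * α) * NY (P (2 ^ (N + k + 1)) f)) ^ θ) := by
  set e : ℕ → ℝ := fun k => ‖f - P (2 ^ (N + k)) f‖
  have hstep : ∀ k, e k ^ θ ≤ e (k + 1) ^ θ + B * (c * 2 ^ α) ^ θ *
      ((2 : ℝ) ^ (-((N + k + 1 : ℕ) : ℝ) * α) * NY (P (2 ^ (N + k + 1)) f)) ^ θ := by
    intro k
    have hNYP : 0 ≤ NY (P (2 ^ (N + k + 1)) f) := hNY _ (hGY _ (hP f _ Nat.one_le_two_pow).1)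
    have h := norm_sub_bestApprox_rpow_le hG hGY jackson hP hB hθ.le hBineq f
      Nat.one_le_two_pow (Nat.pow_le_pow_right two_pos (Nat.le_succ (N + k)))
    rwa [natCast_two_pow_rpow_neg, ← mul_assoc, mul_assoc _ _ (NY _),
      Real.mul_rpow (by positivity) (mul_nonneg (by positivity) hNYP), ← mul_assoc] at h
  have he : Tendsto e atTop (𝓝 0) :=
    (tendsto_norm_sub_bestApprox hG hdense (fun f n hn => (hP f n hn).2) f).comp
      ((tendsto_pow_atTop_atTop_of_one_lt one_lt_two).comp
        (tendsto_atTop_mono (fun k => Nat.le_add_left k N) tendsto_id))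
  rw [← ENNReal.tsum_mul_left]
  refine ENNReal.le_tsum_of_le_add_of_tendsto_zero (u := fun k => ENNReal.ofReal (e k ^ θ))
    (fun k => (ENNReal.ofReal_le_ofReal (hstep k)).trans ?_) ?_
  · rw [← ENNReal.ofReal_mul (by positivity)]
    exact ENNReal.ofReal_add_le
  · simpa [Real.zero_rpow hθ.ne'] using ENNReal.tendsto_ofReal (he.rpow_const (Or.inr hθ.le))

end BestApproximation

theorem stmt5_general {X : Type*} [NormedAddCommGroup X] [NormedSpace ℝ X]
    (Y : Submodule ℝ X) (NY : X → ℝ)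
    (hNY_nonneg : ∀ g : X, 0 ≤ NY g)
    (G : ℕ → Set X)
    (hG_mono : ∀ n : ℕ, G n ⊆ G (n + 1))
    (hG_sub : ∀ n : ℕ, G n ⊆ (Y : Set X))
    (hG_dense : Dense (⋃ n : ℕ, G (n + 1)))
    (α : ℝ)
    (c₁ : ℝ) (hc₁ : 0 < c₁)
    (jackson : ∀ f ∈ Y, ∀ n : ℕ, 1 ≤ n →
      bestApproxError G n f ≤ c₁ * (n : ℝ) ^ (-α) * NY f)
    (P : ℕ → X → X)
    (hP : ∀ (f : X) (n : ℕ), 1 ≤ n → P n f ∈ G n ∧ ‖f - P n f‖ = bestApproxError G n f)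
    (B θ : ℝ) (hB : 0 < B) (hθ : 0 < θ)
    (hBineq : ∀ (f : X) (n : ℕ), 1 ≤ n → ∀ g ∈ G n,
      ‖f - g‖ ^ θ ≤ ‖f - P n f‖ ^ θ + B * ‖g - P n f‖ ^ θ) :
    ∃ C : ℝ, 0 < C ∧ ∀ (f : X) (n : ℕ), 1 ≤ n →
      ENNReal.ofReal (KFunctional (Y : Set X) NY f ((2 : ℝ) ^ (-(n : ℝ) * α)))
        ≤ ENNReal.ofReal C *
          (∑' k : ℕ,
            ENNReal.ofReal
              (((2 : ℝ) ^ (-((n + 1 + k : ℕ) : ℝ) * α) * NY (P (2 ^ (n + 1 + k)) f)) ^ θ)) ^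
            (1 / θ) := by
  set D : ℝ := B * (c₁ * 2 ^ α) ^ θ
  have hD : 0 ≤ D := by positivity
  refine ⟨D ^ (1 / θ) + 2 ^ α, by positivity, fun f n _ => ?_⟩
  set a : ℕ → ℝ := fun k => (2 : ℝ) ^ (-((n + 1 + k : ℕ) : ℝ) * α) * NY (P (2 ^ (n + 1 + k)) f)
  set S := ∑' k, ENNReal.ofReal (a k ^ θ)
  have herror :
      ENNReal.ofReal ‖f - P (2 ^ (n + 1)) f‖ ≤ ENNReal.ofReal D ^ (1 / θ) * S ^ (1 / θ) := by
    rw [← ENNReal.mul_rpow_of_nonneg _ _ (by positivity)]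
    refine ENNReal.ofReal_le_rpow_one_div (norm_nonneg _) hθ
      ((ofReal_norm_sub_bestApprox_rpow_le_tsum (fun g _ => hNY_nonneg g)
        (monotone_nat_of_le_succ hG_mono) hG_sub hG_dense hc₁.le jackson hP hB.le hθ hBineq
        f (n + 1)).trans ?_)
    gcongr
    exact ENNReal.tsum_comp_le_tsum_of_injective (add_left_injective 1) _
  have hhead : ENNReal.ofReal (a 0) ≤ S ^ (1 / θ) :=
    ENNReal.ofReal_le_rpow_one_div (mul_nonneg (by positivity) (hNY_nonneg _)) hθ
      (ENNReal.le_tsum 0)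
  calc ENNReal.ofReal (KFunctional (Y : Set X) NY f ((2 : ℝ) ^ (-(n : ℝ) * α)))
      ≤ ENNReal.ofReal (‖f - P (2 ^ (n + 1)) f‖ + 2 ^ α * a 0) := by
        gcongr
        refine (KFunctional_le (fun g _ => hNY_nonneg g) (by positivity) f
          (hG_sub _ (hP f (2 ^ (n + 1)) Nat.one_le_two_pow).1)).trans_eq ?_
        rw [two_rpow_neg_natCast_mul, mul_assoc]
    _ ≤ ENNReal.ofReal ‖f - P (2 ^ (n + 1)) f‖
          + ENNReal.ofReal (2 ^ α) * ENNReal.ofReal (a 0) := by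
        rw [← ENNReal.ofReal_mul (by positivity)]
        exact ENNReal.ofReal_add_le
    _ ≤ ENNReal.ofReal D ^ (1 / θ) * S ^ (1 / θ) + ENNReal.ofReal (2 ^ α) * S ^ (1 / θ) := by
        gcongr
    _ = ENNReal.ofReal (D ^ (1 / θ) + 2 ^ α) * S ^ (1 / θ) := by
        rw [ENNReal.ofReal_add (by positivity) (by positivity),
          ENNReal.ofReal_rpow_of_nonneg hD (by positivity), add_mul]

/-- Lemma (B). Under Jackson, Bernstein, and the realization
assumption, if the best approximants satisfy
`‖f − g‖^θ ≤ ‖f − P_n(f)‖^θ + B‖g − P_n(f)‖^θ` for all `g ∈ G_n`, then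
`K(f, 2^{-nα}; X, Y) ≲ (∑_{k=n+1}^∞ 2^{-kαθ} ‖P_{2^k}(f)‖_Y^θ)^{1/θ}`. -/
theorem stmt5 {X : Type*} [NormedAddCommGroup X] [NormedSpace ℝ X]
    (Y : Submodule ℝ X) (NY : X → ℝ)
    (hNY_nonneg : ∀ g : X, 0 ≤ NY g)
    (hNY_add : ∀ g h : X, g ∈ Y → h ∈ Y → NY (g + h) ≤ NY g + NY h)
    (hNY_smul : ∀ (c : ℝ) (g : X), g ∈ Y → NY (c • g) = |c| * NY g)
    (G : ℕ → Set X)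
    (hG_zero : (0 : X) ∈ G 1)
    (hG_mono : ∀ n : ℕ, G n ⊆ G (n + 1))
    (hG_neg : ∀ (n : ℕ) (g : X), g ∈ G n → -g ∈ G n)
    (hG_sub : ∀ n : ℕ, G n ⊆ (Y : Set X))
    (hG_dense : Dense (⋃ n : ℕ, G (n + 1)))
    (α : ℝ) (hα : 0 < α)
    (c₁ c₂ : ℝ) (hc₁ : 0 < c₁) (hc₂ : 0 < c₂)
    (jackson : ∀ f ∈ Y, ∀ n : ℕ, 1 ≤ n →
      bestApproxError G n f ≤ c₁ * (n : ℝ) ^ (-α) * NY f)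
    (bernstein : ∀ n : ℕ, 1 ≤ n → ∀ g₁ ∈ G n, ∀ g₂ ∈ G n,
      NY (g₁ - g₂) ≤ c₂ * (n : ℝ) ^ α * ‖g₁ - g₂‖)
    (C₀ : ℝ) (hC₀ : 0 < C₀)
    (hreal : ∀ (f : X) (n : ℕ), 1 ≤ n →
      realization G NY α n f ≤ C₀ * KFunctional (Y : Set X) NY f ((n : ℝ) ^ (-α)))
    (P : ℕ → X → X)
    (hP : ∀ (f : X) (n : ℕ), 1 ≤ n → P n f ∈ G n ∧ ‖f - P n f‖ = bestApproxError G n f)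
    (B θ : ℝ) (hB : 0 < B) (hθ : 0 < θ)
    (hBineq : ∀ (f : X) (n : ℕ), 1 ≤ n → ∀ g ∈ G n,
      ‖f - g‖ ^ θ ≤ ‖f - P n f‖ ^ θ + B * ‖g - P n f‖ ^ θ) :
    ∃ C : ℝ, 0 < C ∧ ∀ (f : X) (n : ℕ), 1 ≤ n →
      ENNReal.ofReal (KFunctional (Y : Set X) NY f ((2 : ℝ) ^ (-(n : ℝ) * α)))
        ≤ ENNReal.ofReal C *
          (∑' k : ℕ,
            ENNReal.ofReal
              (((2 : ℝ) ^ (-((n + 1 + k : ℕ) : ℝ) * α) * NY (P (2 ^ (n + 1 + k)) f)) ^ θ)) ^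
            (1 / θ) :=
  stmt5_general Y NY hNY_nonneg G hG_mono hG_sub hG_dense α c₁ hc₁ jackson P hP B θ hB hθ hBineq
end
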